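/- Fix a probability measure F on [0,1] and a function π : [0,1]×[0,1] → ℝ with π(v,h) ≤ v − h for all v, h (a tie-breaking rule), and define the tie-broken utility u^π(b,h;v) = (v−b)·1{b>h} + π(v,b)·1{b=h}. Then for every highest-competing-bid distribution H on [0,1]: sup over all bidding strategies s' of E_{(v,h)∼F×H}[ E_{b∼s'(v)}[u^π(b,h;v)] ] equals sup over all bidding strategies s' of E_{(v,h)∼F×H}[ E_{b∼s'(v)}[u(b,h;v)] ], where u(b,h;v) = (v−b)·1{b≥h}. -/

import Mathlib

open MeasureTheory ProbabilityTheory Set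

noncomputable section

namespace FPA

/-- The unit interval `[0,1] ⊆ ℝ`. -/
def Iu : Set ℝ := Set.Icc 0 1

/-- `μ` is a probability measure on `[0,1]`. -/
def IsProbOn (μ : Measure ℝ) : Prop := IsProbabilityMeasure μ ∧ μ Iu = 1

/-- A bidding strategy: a Markov kernel from `[0,1]` to `[0,1]`. -/
def IsStrategy (s : Kernel ℝ ℝ) : Prop := IsMarkovKernel s ∧ ∀ v : ℝ, s v Iu = 1

/-- The buyer's utility `u(b,h;v) = (v−b)·1{b ≥ h}`. -/
def util (b h v : ℝ) : ℝ := (v - b) * (if h ≤ b then 1 else 0)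

/-- Expected utility `U_F(s,H)`. -/
def eUtil (F : Measure ℝ) (s : Kernel ℝ ℝ) (H : Measure ℝ) : ℝ :=
  ∫ v, ∫ h, ∫ b, util b h v ∂(s v) ∂H ∂F

/-- Regret `Reg_F(s,H) = sup_{s'∈S} U_F(s',H) − U_F(s,H)`. -/
def regret (F : Measure ℝ) (s : Kernel ℝ ℝ) (H : Measure ℝ) : ℝ :=
  (⨆ s' : {k : Kernel ℝ ℝ // IsStrategy k}, eUtil F s'.1 H) - eUtil F s H

/-- Induced bid distribution `P_{s,F}`. -/
def bidDist (F : Measure ℝ) (s : Kernel ℝ ℝ) : Measure ℝ := F.bind (fun v => s v)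

/-- CDF of a measure on `[0,1]`: `F(x) = F([0,x])`. -/
def cdf01 (F : Measure ℝ) (x : ℝ) : ℝ := (F (Set.Iic x)).toReal

/-- Generalized inverse `F⁻(t) = inf {x ∈ [0,1] : F(x) ≥ t}`. -/
def qinv (F : Measure ℝ) (t : ℝ) : ℝ := sInf {x | x ∈ Iu ∧ t ≤ cdf01 F x}

/-- Full-information benchmark against a deterministic highest competing bid `h`. -/
def bench (F : Measure ℝ) (h : ℝ) : ℝ := ∫ v, (v - h) * (if h ≤ v then 1 else 0) ∂F

/-- Full-information regret `R_F(s,H)`. -/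
def fregret (F : Measure ℝ) (s : Kernel ℝ ℝ) (H : Measure ℝ) : ℝ :=
  (∫ h, bench F h ∂H) - eUtil F s H

/-- Absolute continuity of a function on `[0,1]` (FTC characterization). -/
def AbsContOn01 (f : ℝ → ℝ) : Prop :=
  ∃ g : ℝ → ℝ, IntervalIntegrable g volume 0 1 ∧
    ∀ x ∈ Iu, f x = f 0 + ∫ t in (0:ℝ)..x, g t

/-- The set of quantiles corresponding to value `v`: `Y(v) = {y ∈ [0,1] : F⁻(y) = v}`. -/
def Yset (F : Measure ℝ) (v : ℝ) : Set ℝ := {y | y ∈ Iu ∧ qinv F y = v}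

/-- Uniform distribution on a set `A ⊆ ℝ`. -/
def unifOn (A : Set ℝ) : Measure ℝ := (volume A)⁻¹ • volume.restrict A

/-- `s` is the bidding strategy corresponding to the quantile-based bidding strategy `Q`:
it bids `Q(F(v))` when `F({v}) = 0`, and the pushforward under `Q` of the uniform
distribution on `Y(v)` when `F({v}) > 0`. -/
def IsQuantileStrategy (F : Measure ℝ) (Q : ℝ → ℝ) (s : Kernel ℝ ℝ) : Prop :=
  IsStrategy s ∧ ∀ v ∈ Iu,
    s v = if F {v} = 0 then Measure.dirac (Q (cdf01 F v)) else (unifOn (Yset F v)).map Q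

/-- The candidate worst-case highest-competing-bid CDF
`H*(x) = exp(−∫_{(Q*)⁻¹(x)}^1 dt/(1−F(Q*(t))))`. -/
def Hstar (F : Measure ℝ) (Q : ℝ → ℝ) (x : ℝ) : ℝ :=
  Real.exp (-(∫ t in (Function.invFunOn Q Iu x)..(1:ℝ), 1 / (1 - cdf01 F (Q t))))


/-- Tie-broken utility `u^π(b,h;v) = (v−b)·1{b>h} + π(v,b)·1{b=h}`. -/
def utilTie (tie : ℝ → ℝ → ℝ) (b h v : ℝ) : ℝ :=
  (v - b) * (if h < b then 1 else 0) + tie v b * (if b = h then 1 else 0)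

/-- Expected utility under the tie-breaking rule `π`. -/
def eUtilTie (tie : ℝ → ℝ → ℝ) (F : Measure ℝ) (s : Kernel ℝ ℝ) (H : Measure ℝ) : ℝ :=
  ∫ v, ∫ h, ∫ b, utilTie tie b h v ∂(s v) ∂H ∂F

/-!
Capping every bid at the value makes the favourable-tie utility `u` nonnegative and at least
the tie-broken `u^π`, because `π(v, b) ≤ v - b`; hence the tie-broken optimum is at most the
favourable one. Conversely, cap the bid `b` at `min v (1 - δ)` (bids above `1 - δ` earn at most
`δ`) and raise the capped bid `m` to `m + θ (1 - m)`, which costs at most `θ ≤ δ`. Since `m < 1`,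
the tie events `{m + θ (1 - m) = h}` are disjoint for distinct `θ`; only countably many of them
have positive probability, so for some `θ ∈ (0, δ)` ties are null, and there `u^π = u`.
-/

open Function

section Integrals

variable {α β γ : Type*} [MeasurableSpace α] [MeasurableSpace β] [MeasurableSpace γ]

lemma integral_le_integral_of_le_of_nonneg {μ : Measure α} {f g : α → ℝ}
    (hg : Integrable g μ) (hg0 : 0 ≤ᵐ[μ] g) (hfg : f ≤ᵐ[μ] g) :
    ∫ x, f x ∂μ ≤ ∫ x, g x ∂μ := by
  by_cases hf : Integrable f μ
  · exact integral_mono_ae hf hg hfg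
  · rw [integral_undef hf]
    exact integral_nonneg_of_ae hg0

lemma integral_sub_le_integral {μ : Measure α} [IsProbabilityMeasure μ] {f g : α → ℝ} {c : ℝ}
    (hf : Integrable f μ) (hg : Integrable g μ) (hfg : ∀ᵐ x ∂μ, f x - c ≤ g x) :
    ∫ x, f x ∂μ - c ≤ ∫ x, g x ∂μ := by
  have := integral_mono_ae (f := fun x => f x - c) (hf.sub (integrable_const c)) hg hfg
  rwa [integral_sub hf (integrable_const c), integral_const, probReal_univ, smul_eq_mul,
    one_mul] at this

lemma abs_integral_le_of_abs_le {μ : Measure α} [IsProbabilityMeasure μ] {f : α → ℝ} {C : ℝ}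
    (h : ∀ᵐ x ∂μ, |f x| ≤ C) : |∫ x, f x ∂μ| ≤ C := by
  simpa using norm_integral_le_of_norm_le_const (μ := μ) (f := f) h

lemma integrable_of_abs_le {μ : Measure α} [IsFiniteMeasure μ] {f : α → ℝ} {C : ℝ}
    (hf : AEStronglyMeasurable f μ) (h : ∀ᵐ x ∂μ, |f x| ≤ C) : Integrable f μ :=
  .of_bound hf C (by simpa using h)

lemma integral_mem_Icc_and_integral_le {μ : Measure α} [IsProbabilityMeasure μ] {f g : α → ℝ}
    {C : ℝ} (hg : AEStronglyMeasurable g μ) (hfg : ∀ᵐ x ∂μ, g x ∈ Icc 0 C ∧ f x ≤ g x) :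
    ∫ x, g x ∂μ ∈ Icc 0 C ∧ ∫ x, f x ∂μ ≤ ∫ x, g x ∂μ := by
  have habs : ∀ᵐ x ∂μ, |g x| ≤ C := hfg.mono fun x hx => abs_le.mpr
    ⟨by linarith [hx.1.1, hx.1.2], hx.1.2⟩
  have hg0 : 0 ≤ᵐ[μ] g := hfg.mono fun x hx => hx.1.1
  exact ⟨⟨integral_nonneg_of_ae hg0, (le_abs_self _).trans (abs_integral_le_of_abs_le habs)⟩,
    integral_le_integral_of_le_of_nonneg (integrable_of_abs_le hg habs) hg0
      (hfg.mono fun x hx => hx.2)⟩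

lemma abs_integral_le_and_integral_sub_le {μ : Measure α} [IsProbabilityMeasure μ]
    {f g : α → ℝ} {C c : ℝ} (hf : AEStronglyMeasurable f μ) (hg : AEStronglyMeasurable g μ)
    (hfg : ∀ᵐ x ∂μ, |f x| ≤ C ∧ |g x| ≤ C ∧ f x - c ≤ g x) :
    |∫ x, f x ∂μ| ≤ C ∧ |∫ x, g x ∂μ| ≤ C ∧ ∫ x, f x ∂μ - c ≤ ∫ x, g x ∂μ := by
  have hf_abs : ∀ᵐ x ∂μ, |f x| ≤ C := hfg.mono fun _ hx => hx.1
  have hg_abs : ∀ᵐ x ∂μ, |g x| ≤ C := hfg.mono fun _ hx => hx.2.1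
  exact ⟨abs_integral_le_of_abs_le hf_abs, abs_integral_le_of_abs_le hg_abs,
    integral_sub_le_integral (integrable_of_abs_le hf hf_abs) (integrable_of_abs_le hg hg_abs)
      (hfg.mono fun _ hx => hx.2.2)⟩

def iteratedIntegral (F : Measure α) (H : Measure β) (κ : Kernel α γ) (f : α → β → γ → ℝ) : ℝ :=
  ∫ v, ∫ h, ∫ b, f v h b ∂κ v ∂H ∂F

lemma stronglyMeasurable_integral_kernel_fst (κ : Kernel α γ) [IsSFiniteKernel κ]
    {f : α → β → γ → ℝ} (hf : Measurable (uncurry (uncurry f))) :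
    StronglyMeasurable (uncurry fun v h => ∫ b, f v h b ∂κ v) :=
  hf.stronglyMeasurable.integral_kernel_prod_right (κ := κ.prodMkRight β)

variable {F : Measure α} {H : Measure β} {κ : Kernel α γ} [IsProbabilityMeasure F]
  [IsProbabilityMeasure H] [IsMarkovKernel κ] {f g : α → β → γ → ℝ} {C : ℝ}

/-- `f` need not be integrable at any level: the junk value `0` of its integral is then still
below the nonnegative integral of `g`. -/
lemma iteratedIntegral_le_of_nonneg (hg : Measurable (uncurry (uncurry g)))
    (hfg : ∀ᵐ v ∂F, ∀ᵐ h ∂H, ∀ᵐ b ∂κ v, g v h b ∈ Icc 0 C ∧ f v h b ≤ g v h b) :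
    iteratedIntegral F H κ f ≤ iteratedIntegral F H κ g := by
  have hG := stronglyMeasurable_integral_kernel_fst κ hg
  refine (integral_mem_Icc_and_integral_le (C := C)
    hG.integral_prod_right'.aestronglyMeasurable ?_).2
  filter_upwards [hfg] with v hv
  refine integral_mem_Icc_and_integral_le
    (hG.comp_measurable measurable_prodMk_left).aestronglyMeasurable ?_
  filter_upwards [hv] with h hh
  exact integral_mem_Icc_and_integral_le
    (hg.comp (measurable_prodMk_left (x := (v, h)))).aestronglyMeasurable hh

lemma iteratedIntegral_sub_le {c : ℝ} (hf : Measurable (uncurry (uncurry f)))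
    (hg : Measurable (uncurry (uncurry g)))
    (hfg : ∀ᵐ v ∂F, ∀ᵐ h ∂H, ∀ᵐ b ∂κ v, |f v h b| ≤ C ∧ |g v h b| ≤ C ∧ f v h b - c ≤ g v h b) :
    iteratedIntegral F H κ f - c ≤ iteratedIntegral F H κ g := by
  have hF := stronglyMeasurable_integral_kernel_fst κ hf
  have hG := stronglyMeasurable_integral_kernel_fst κ hg
  refine (abs_integral_le_and_integral_sub_le (C := C) hF.integral_prod_right'.aestronglyMeasurable
    hG.integral_prod_right'.aestronglyMeasurable ?_).2.2
  filter_upwards [hfg] with v hv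
  refine abs_integral_le_and_integral_sub_le
    (hF.comp_measurable measurable_prodMk_left).aestronglyMeasurable
    (hG.comp_measurable measurable_prodMk_left).aestronglyMeasurable ?_
  filter_upwards [hv] with h hh
  exact abs_integral_le_and_integral_sub_le
    (hf.comp (measurable_prodMk_left (x := (v, h)))).aestronglyMeasurable
    (hg.comp (measurable_prodMk_left (x := (v, h)))).aestronglyMeasurable hh

end Integrals

section Utility

variable {b h v : ℝ}

lemma util_nonneg (hbv : b ≤ v) : 0 ≤ util b h v := by
  unfold util; split_ifs <;> linarith

lemma util_nonpos (hvb : v ≤ b) : util b h v ≤ 0 := by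
  unfold util; split_ifs <;> linarith

lemma abs_util_le_one (hv : v ∈ Iu) (hb : b ∈ Iu) : |util b h v| ≤ 1 := by
  obtain ⟨hv0, hv1⟩ := hv
  obtain ⟨hb0, hb1⟩ := hb
  unfold util
  rw [abs_le]
  split_ifs <;> constructor <;> linarith

lemma utilTie_of_ne {tie : ℝ → ℝ → ℝ} (hbh : b ≠ h) :
    utilTie tie b h v = (v - b) * (if h < b then 1 else 0) := by
  simp [utilTie, hbh]

lemma abs_utilTie_le_one {tie : ℝ → ℝ → ℝ} (hbh : b ≠ h) (hv : v ∈ Iu) (hb : b ∈ Iu) :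
    |utilTie tie b h v| ≤ 1 := by
  obtain ⟨hv0, hv1⟩ := hv
  obtain ⟨hb0, hb1⟩ := hb
  rw [utilTie_of_ne hbh, abs_le]
  split_ifs <;> constructor <;> linarith

lemma utilTie_le_util {tie : ℝ → ℝ → ℝ} (htie : ∀ v h : ℝ, tie v h ≤ v - h) :
    utilTie tie b h v ≤ util b h v := by
  unfold utilTie util
  rcases lt_trichotomy h b with hhb | rfl | hbh
  · simp [hhb, hhb.ne', hhb.le]
  · simpa using htie v h
  · simp [hbh.not_gt, hbh.ne, hbh.not_ge]

variable {α : Type*} [MeasurableSpace α] {f g k : α → ℝ}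

lemma _root_.Measurable.util (hf : Measurable f) (hg : Measurable g) (hk : Measurable k) :
    Measurable fun x => util (f x) (g x) (k x) :=
  (hk.sub hf).mul (Measurable.ite (measurableSet_le hg hf) measurable_const measurable_const)

lemma _root_.Measurable.utilTie {tie : ℝ → ℝ → ℝ} (htie : Measurable (uncurry tie))
    (hf : Measurable f) (hg : Measurable g) (hk : Measurable k) :
    Measurable fun x => utilTie tie (f x) (g x) (k x) :=
  ((hk.sub hf).mul (Measurable.ite (measurableSet_lt hg hf) measurable_const measurable_const)).add
    ((htie.comp (hk.prodMk hf)).mul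
      (Measurable.ite (measurableSet_eq_fun hf hg) measurable_const measurable_const))

end Utility

section Bids

def capBid (c v b : ℝ) : ℝ := max 0 (min (min v b) c)

def shiftBid (δ θ v b : ℝ) : ℝ := θ + (1 - θ) * capBid (1 - δ) v b

variable {c δ θ v b h : ℝ}

lemma capBid_nonneg : 0 ≤ capBid c v b := le_max_left _ _

lemma capBid_le_value (hv : 0 ≤ v) : capBid c v b ≤ v :=
  max_le hv ((min_le_left _ _).trans (min_le_left _ _))

lemma capBid_le_bid (hb : 0 ≤ b) : capBid c v b ≤ b :=
  max_le hb ((min_le_left _ _).trans (min_le_right _ _))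

lemma capBid_le_max_cap : capBid c v b ≤ max 0 c := max_le_max le_rfl (min_le_right _ _)

lemma capBid_of_le (hb : 0 ≤ b) (hbv : b ≤ v) (hbc : b ≤ c) : capBid c v b = b := by
  rw [capBid, min_eq_right hbv, min_eq_left hbc, max_eq_right hb]

lemma lt_or_lt_of_capBid_lt (h : capBid c v b < b) : v < b ∨ c < b := by
  have := (le_max_right _ _).trans_lt h
  simpa [min_lt_iff] using this

lemma measurable_capBid : Measurable (uncurry (capBid c)) := by
  unfold capBid; fun_prop

lemma measurable_shiftBid : Measurable (uncurry (shiftBid δ θ)) :=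
  measurable_const.add (measurable_const.mul measurable_capBid)

lemma capBid_mem_Iu (hc : c ≤ 1) : capBid c v b ∈ Iu :=
  ⟨capBid_nonneg, capBid_le_max_cap.trans (max_le zero_le_one hc)⟩

lemma shiftBid_mem_Iu (hθ : θ ∈ Iu) (hδ : 0 ≤ δ) : shiftBid δ θ v b ∈ Iu := by
  obtain ⟨hθ0, hθ1⟩ := hθ
  obtain ⟨hm0, hm1⟩ := capBid_mem_Iu (v := v) (b := b) (by linarith : 1 - δ ≤ 1)
  constructor <;> unfold shiftBid <;> nlinarith

lemma shiftBid_injective (hδ : 0 < δ) : Injective fun θ => shiftBid δ θ v b := by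
  intro θ₁ θ₂ hθ
  have hm : capBid (1 - δ) v b < 1 := capBid_le_max_cap.trans_lt (max_lt one_pos (by linarith))
  have : (θ₁ - θ₂) * (1 - capBid (1 - δ) v b) = 0 := by
    simp only [shiftBid] at hθ; linear_combination hθ
  rcases mul_eq_zero.mp this with h | h <;> linarith

lemma utilTie_le_util_capBid {tie : ℝ → ℝ → ℝ} (htie : ∀ v h : ℝ, tie v h ≤ v - h)
    (hv : 0 ≤ v) (hb : 0 ≤ b) (hbc : b ≤ c) : utilTie tie b h v ≤ util (capBid c v b) h v := by
  refine (utilTie_le_util htie).trans ?_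
  rcases le_total b v with hbv | hvb
  · rw [capBid_of_le hb hbv hbc]
  · exact (util_nonpos hvb).trans (util_nonneg (capBid_le_value hv))

lemma util_sub_le_utilTie_shiftBid {tie : ℝ → ℝ → ℝ} (hθ : 0 ≤ θ) (hθδ : θ ≤ δ) (hv : v ∈ Iu)
    (hb : 0 ≤ b) (hne : shiftBid δ θ v b ≠ h) :
    util b h v - δ ≤ utilTie tie (shiftBid δ θ v b) h v := by
  obtain ⟨hv0, hv1⟩ := hv
  rw [utilTie_of_ne hne]
  set m := capBid (1 - δ) v b
  have hm0 : 0 ≤ m := capBid_nonneg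
  have hm1 : m ≤ 1 := capBid_le_max_cap.trans (max_le zero_le_one (by linarith))
  have hmv : m ≤ v := capBid_le_value hv0
  have hmb : m ≤ b := capBid_le_bid hb
  have hlow : m ≤ shiftBid δ θ v b := by unfold shiftBid; nlinarith
  have hup : shiftBid δ θ v b ≤ m + θ := by unfold shiftBid; nlinarith
  unfold util
  rcases lt_or_gt_of_ne hne with hlt | hgt
  · rw [if_neg hlt.not_gt]
    split_ifs with hhb
    · rcases lt_or_lt_of_capBid_lt (hlow.trans_lt (hlt.trans_le hhb)) with h1 | h1 <;> linarith
    · linarith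
  · rw [if_pos hgt]
    split_ifs <;> linarith

end Bids

section Rebid

variable {α β γ : Type*} [MeasurableSpace α] [MeasurableSpace β] [MeasurableSpace γ]

def rebid (s : Kernel α β) (g : α → β → γ) : Kernel α γ := (Kernel.id ×ₖ s).map (uncurry g)

variable {s : Kernel α β} [IsSFiniteKernel s] {g : α → β → γ}

lemma rebid_apply (hg : Measurable (uncurry g)) (v : α) : rebid s g v = (s v).map (g v) := by
  rw [rebid, Kernel.map_apply _ hg, Kernel.prod_apply, Kernel.id_apply, Measure.dirac_prod,
    Measure.map_map hg measurable_prodMk_left]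
  rfl

lemma integral_rebid (hg : Measurable (uncurry g)) (v : α) {f : γ → ℝ} (hf : Measurable f) :
    ∫ c, f c ∂rebid s g v = ∫ b, f (g v b) ∂s v := by
  rw [rebid_apply hg]
  exact integral_map (hg.comp measurable_prodMk_left).aemeasurable hf.aestronglyMeasurable

lemma iteratedIntegral_rebid {ι : Type*} [MeasurableSpace ι] (F : Measure α) (H : Measure ι)
    (hg : Measurable (uncurry g)) {f : α → ι → γ → ℝ} (hf : ∀ v h, Measurable (f v h)) :
    iteratedIntegral F H (rebid s g) f = iteratedIntegral F H s fun v h b => f v h (g v b) := by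
  simp only [iteratedIntegral, integral_rebid hg _ (hf _ _)]

end Rebid

lemma ae_mem_Iu {μ : Measure ℝ} [IsProbabilityMeasure μ] (h : μ Iu = 1) : ∀ᵐ x ∂μ, x ∈ Iu :=
  (prob_compl_eq_zero_iff measurableSet_Icc).mpr h

lemma isStrategy_const {μ : Measure ℝ} (hμ : IsProbOn μ) : IsStrategy (Kernel.const ℝ μ) :=
  have := hμ.1
  ⟨inferInstance, fun _ => hμ.2⟩

lemma isStrategy_rebid {s : Kernel ℝ ℝ} (hs : IsStrategy s) {g : ℝ → ℝ → ℝ}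
    (hg : Measurable (uncurry g)) (hg_mem : ∀ v b, g v b ∈ Iu) : IsStrategy (rebid s g) := by
  have := hs.1
  refine ⟨Kernel.IsMarkovKernel.map _ hg, fun v => ?_⟩
  have hgv : Measurable (g v) := hg.comp measurable_prodMk_left
  rw [rebid_apply hg, Measure.map_apply hgv (s := Iu) measurableSet_Icc,
    show g v ⁻¹' Iu = univ from eq_univ_of_forall (hg_mem v)]
  exact measure_univ

lemma exists_mem_ae_ne {Ω ι : Type*} [MeasurableSpace Ω] (P : Measure Ω) [SFinite P]
    {S : Set ι} (hS : ¬ S.Countable) {X : ι → Ω → ℝ} {Y : Ω → ℝ} (hX : ∀ θ, Measurable (X θ))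
    (hY : Measurable Y) (hinj : ∀ ω, Injective fun θ => X θ ω) :
    ∃ θ ∈ S, ∀ᵐ ω ∂P, X θ ω ≠ Y ω := by
  have hdisj : Pairwise (Disjoint on fun θ => {ω | X θ ω = Y ω}) := fun θ₁ θ₂ hne =>
    disjoint_left.mpr fun ω h₁ h₂ => hne (hinj ω (h₁.trans h₂.symm))
  obtain ⟨θ, hθS, hθ⟩ := (Set.not_subset.mp fun hsub => hS
    ((Measure.countable_meas_pos_of_disjoint_iUnion (μ := P)
      (fun θ => measurableSet_eq_fun (hX θ) hY) hdisj).mono hsub))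
  exact ⟨θ, hθS, ae_iff.mpr (by simpa using hθ)⟩

lemma exists_ae_shiftBid_ne (F H : Measure ℝ) [SFinite F] [SFinite H] (s : Kernel ℝ ℝ)
    [IsSFiniteKernel s] {δ : ℝ} (hδ : 0 < δ) :
    ∃ θ ∈ Ioo 0 (min δ 1), ∀ᵐ v ∂F, ∀ᵐ h ∂H, ∀ᵐ b ∂s v, shiftBid δ θ v b ≠ h := by
  obtain ⟨θ, hθ, hne⟩ := exists_mem_ae_ne (F ⊗ₘ (Kernel.const ℝ H ×ₖ s))
    (by rw [Cardinal.Real.Ioo_countable_iff]; exact (lt_min hδ one_pos).not_ge)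
    (X := fun θ p => shiftBid δ θ p.1 p.2.2) (Y := fun p => p.2.1)
    (fun θ => measurable_shiftBid.comp (measurable_fst.prodMk measurable_snd.snd))
    measurable_snd.fst (fun p => shiftBid_injective hδ)
  refine ⟨θ, hθ, ?_⟩
  filter_upwards [Measure.ae_ae_of_ae_compProd hne] with v hv
  rw [Kernel.prod_apply, Kernel.const_apply] at hv
  exact Measure.ae_ae_of_ae_prod hv

variable {F H : Measure ℝ} {s : Kernel ℝ ℝ} {tie : ℝ → ℝ → ℝ}

lemma eUtil_le_one (hF : IsProbOn F) (hH : IsProbOn H) (hs : IsStrategy s) :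
    eUtil F s H ≤ 1 := by
  have := hF.1; have := hH.1; have := hs.1
  have hle := iteratedIntegral_le_of_nonneg (F := F) (H := H) (κ := s)
    (f := fun v h b => util b h v) (g := fun _ _ _ => 1) (C := 1) measurable_const (by
      filter_upwards [ae_mem_Iu hF.2] with v hv
      refine ae_of_all _ fun h => ?_
      filter_upwards [ae_mem_Iu (hs.2 v)] with b hb
      exact ⟨⟨zero_le_one, le_rfl⟩, (le_abs_self _).trans (abs_util_le_one hv hb)⟩)
  simpa [iteratedIntegral, eUtil] using hle

lemma eUtilTie_le_eUtil_rebid_capBid (hF : IsProbOn F) (hH : IsProbOn H)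
    (htie : ∀ v h : ℝ, tie v h ≤ v - h) (hs : IsStrategy s) :
    eUtilTie tie F s H ≤ eUtil F (rebid s (capBid 1)) H := by
  have := hF.1; have := hH.1; have := hs.1
  change iteratedIntegral F H s _ ≤ iteratedIntegral F H _ _
  rw [iteratedIntegral_rebid F H measurable_capBid
    fun v h => Measurable.util measurable_id' measurable_const measurable_const]
  refine iteratedIntegral_le_of_nonneg (C := 1)
    (.util (measurable_capBid.comp (measurable_fst.fst.prodMk measurable_snd))
      measurable_fst.snd measurable_fst.fst) ?_
  filter_upwards [ae_mem_Iu hF.2] with v hv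
  refine ae_of_all _ fun h => ?_
  filter_upwards [ae_mem_Iu (hs.2 v)] with b hb
  exact ⟨⟨util_nonneg (capBid_le_value hv.1),
    (le_abs_self _).trans (abs_util_le_one hv (capBid_mem_Iu le_rfl))⟩,
    utilTie_le_util_capBid htie hv.1 hb.1 hb.2⟩

lemma exists_isStrategy_eUtil_sub_le_eUtilTie (hF : IsProbOn F) (hH : IsProbOn H)
    (htiem : Measurable (uncurry tie)) (hs : IsStrategy s) {δ : ℝ} (hδ : 0 < δ) :
    ∃ s', IsStrategy s' ∧ eUtil F s H - δ ≤ eUtilTie tie F s' H := by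
  have := hF.1; have := hH.1; have := hs.1
  obtain ⟨θ, ⟨hθ0, hθ⟩, hnotie⟩ := exists_ae_shiftBid_ne F H s hδ
  have hθδ : θ ≤ δ := hθ.le.trans (min_le_left _ _)
  have hbid_mem : ∀ v b, shiftBid δ θ v b ∈ Iu :=
    fun _ _ => shiftBid_mem_Iu ⟨hθ0.le, hθ.le.trans (min_le_right _ _)⟩ hδ.le
  refine ⟨rebid s (shiftBid δ θ), isStrategy_rebid hs measurable_shiftBid hbid_mem, ?_⟩
  change iteratedIntegral F H s _ - δ ≤ iteratedIntegral F H _ _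
  rw [iteratedIntegral_rebid F H measurable_shiftBid
    fun v h => Measurable.utilTie htiem measurable_id' measurable_const measurable_const]
  refine iteratedIntegral_sub_le (C := 1)
    (measurable_snd.util measurable_fst.snd measurable_fst.fst)
    (.utilTie htiem (measurable_shiftBid.comp (measurable_fst.fst.prodMk measurable_snd))
      measurable_fst.snd measurable_fst.fst) ?_
  filter_upwards [ae_mem_Iu hF.2, hnotie] with v hv hnotie_v
  filter_upwards [hnotie_v] with h hnotie_vh
  filter_upwards [ae_mem_Iu (hs.2 v), hnotie_vh] with b hb hne
  exact ⟨abs_util_le_one hv hb, abs_utilTie_le_one hne hv (hbid_mem v b),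
    util_sub_le_utilTie_shiftBid hθ0.le hθδ hv hb.1 hne⟩

/-- Lemma: the benchmark does not depend on the tie-breaking rule: for
any tie-breaking rule `π` with `π(v,h) ≤ v − h` and any highest-competing-bid distribution
`H` on `[0,1]`, the optimal expected utility over all bidding strategies is the same for
`u^π` and for the favorable-tie utility `u`. -/
theorem benchmark_tie_breaking_invariant
    (F : Measure ℝ) (hF : IsProbOn F) (H : Measure ℝ) (hH : IsProbOn H)
    (tie : ℝ → ℝ → ℝ) (htiem : Measurable (Function.uncurry tie))
    (htie : ∀ v h : ℝ, tie v h ≤ v - h) :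
    (⨆ s' : {k : Kernel ℝ ℝ // IsStrategy k}, eUtilTie tie F s'.1 H)
      = ⨆ s' : {k : Kernel ℝ ℝ // IsStrategy k}, eUtil F s'.1 H := by
  have hcap (s : {k : Kernel ℝ ℝ // IsStrategy k}) :
      ∃ s' : {k : Kernel ℝ ℝ // IsStrategy k}, eUtilTie tie F s.1 H ≤ eUtil F s'.1 H :=
    ⟨⟨_, isStrategy_rebid s.2 measurable_capBid fun _ _ => capBid_mem_Iu le_rfl⟩,
      eUtilTie_le_eUtil_rebid_capBid hF hH htie s.2⟩
  have hbdd : BddAbove (range fun s : {k : Kernel ℝ ℝ // IsStrategy k} => eUtil F s.1 H) :=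
    ⟨1, forall_mem_range.mpr fun s => eUtil_le_one hF hH s.2⟩
  have hbdd_tie : BddAbove (range fun s : {k : Kernel ℝ ℝ // IsStrategy k} =>
      eUtilTie tie F s.1 H) :=
    ⟨1, forall_mem_range.mpr fun s => (hcap s).elim fun s' h => h.trans (eUtil_le_one hF hH s'.2)⟩
  have : Nonempty {k : Kernel ℝ ℝ // IsStrategy k} := ⟨⟨_, isStrategy_const hH⟩⟩
  refine le_antisymm (ciSup_mono_of_forall_exists hbdd hcap) (ciSup_le fun s => ?_)
  refine le_of_forall_sub_le fun δ hδ => ?_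
  obtain ⟨s', hs', hle⟩ := exists_isStrategy_eUtil_sub_le_eUtilTie hF hH htiem s.2 hδ
  exact hle.trans (le_ciSup hbdd_tie ⟨s', hs'⟩)

end FPA
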